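/- arXiv:2105.00727 — 4 statements merged into one kernel-verified Lean document; each statement's English description precedes it below -/
import Mathlib

section
/- Let b be a prime number and a a positive integer that is a quadratic non-residue modulo b (i.e. there is no x with x² ≡ a mod b). Then the quaternion algebra (a,b/ℚ) with basis 1, I, J, K and relations I² = a, J² = b, IJ = K = −JI is a division algebra; equivalently, the quadratic form q0² − a·q1² − b·q2² + ab·q3² over ℚ vanishes only at (q0,q1,q2,q3) = (0,0,0,0). -/
/-- Key mod-b step: if `b ∣ u² - a v²` and `a` is a non-residue mod `b`, then `b ∣ u` and `b ∣ v`. -/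
lemma quat_key (a b : ℕ) (hb : Nat.Prime b)
    (hres : ¬ ∃ x : ZMod b, x ^ 2 = (a : ZMod b)) (u v : ℤ)
    (h : (b : ℤ) ∣ u ^ 2 - a * v ^ 2) : (b : ℤ) ∣ u ∧ (b : ℤ) ∣ v := by
  haveI : Fact b.Prime := ⟨hb⟩
  have h0 : ((u ^ 2 - a * v ^ 2 : ℤ) : ZMod b) = 0 := by
    rwa [ZMod.intCast_zmod_eq_zero_iff_dvd]
  push_cast at h0
  have heq : (u : ZMod b) ^ 2 = (a : ZMod b) * (v : ZMod b) ^ 2 := by linear_combination h0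
  by_cases hv : (v : ZMod b) = 0
  · have hu : (u : ZMod b) = 0 := by
      have : (u : ZMod b) ^ 2 = 0 := by rw [heq, hv]; ring
      exact pow_eq_zero_iff (n := 2) (by norm_num) |>.mp this
    constructor
    · rwa [← ZMod.intCast_zmod_eq_zero_iff_dvd]
    · rwa [← ZMod.intCast_zmod_eq_zero_iff_dvd]
  · exact absurd ⟨(u : ZMod b) * ((v : ZMod b))⁻¹, by
      field_simp
      linear_combination heq⟩ hres

/-- Descent: the only integer solution is trivial. -/
lemma quat_int (a b : ℕ) (hb : Nat.Prime b)
    (hres : ¬ ∃ x : ZMod b, x ^ 2 = (a : ZMod b)) :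
    ∀ n : ℕ, ∀ x y z w : ℤ, x.natAbs + y.natAbs + z.natAbs + w.natAbs < n →
      x ^ 2 - a * y ^ 2 - b * z ^ 2 + a * b * w ^ 2 = 0 →
      x = 0 ∧ y = 0 ∧ z = 0 ∧ w = 0 := by
  intro n
  induction n using Nat.strong_induction_on with
  | _ n ih =>
    intro x y z w hm h
    by_cases htriv : x.natAbs + y.natAbs + z.natAbs + w.natAbs = 0
    · refine ⟨?_, ?_, ?_, ?_⟩ <;> omega
    have hb0 : (b : ℤ) ≠ 0 := by exact_mod_cast hb.ne_zero
    have h1 : (b : ℤ) ∣ x ^ 2 - a * y ^ 2 := ⟨z ^ 2 - a * w ^ 2, by linear_combination h⟩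
    obtain ⟨hx, hy⟩ := quat_key a b hb hres x y h1
    obtain ⟨x1, hx1⟩ := hx
    obtain ⟨y1, hy1⟩ := hy
    have h2 : z ^ 2 - (a : ℤ) * w ^ 2 = b * (x1 ^ 2 - a * y1 ^ 2) := by
      apply mul_left_cancel₀ hb0
      subst hx1 hy1
      linear_combination -h
    obtain ⟨hz, hw⟩ := quat_key a b hb hres z w ⟨x1 ^ 2 - a * y1 ^ 2, h2⟩
    obtain ⟨z1, hz1⟩ := hz
    obtain ⟨w1, hw1⟩ := hw
    have h3 : x1 ^ 2 - (a : ℤ) * y1 ^ 2 - b * z1 ^ 2 + a * b * w1 ^ 2 = 0 := by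
      apply mul_left_cancel₀ hb0
      rw [hz1, hw1] at h2
      linear_combination -h2
    -- measure decreases
    have hble : 2 ≤ b := hb.two_le
    have e1 : x.natAbs = b * x1.natAbs := by rw [hx1, Int.natAbs_mul, Int.natAbs_natCast]
    have e2 : y.natAbs = b * y1.natAbs := by rw [hy1, Int.natAbs_mul, Int.natAbs_natCast]
    have e3 : z.natAbs = b * z1.natAbs := by rw [hz1, Int.natAbs_mul, Int.natAbs_natCast]
    have e4 : w.natAbs = b * w1.natAbs := by rw [hw1, Int.natAbs_mul, Int.natAbs_natCast]
    have l1 : 2 * x1.natAbs ≤ x.natAbs := by rw [e1]; exact Nat.mul_le_mul_right _ hble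
    have l2 : 2 * y1.natAbs ≤ y.natAbs := by rw [e2]; exact Nat.mul_le_mul_right _ hble
    have l3 : 2 * z1.natAbs ≤ z.natAbs := by rw [e3]; exact Nat.mul_le_mul_right _ hble
    have l4 : 2 * w1.natAbs ≤ w.natAbs := by rw [e4]; exact Nat.mul_le_mul_right _ hble
    have hm' : x1.natAbs + y1.natAbs + z1.natAbs + w1.natAbs <
        x.natAbs + y.natAbs + z.natAbs + w.natAbs := by omega
    obtain ⟨hz1', hz2', hz3', hz4'⟩ :=
      ih (x.natAbs + y.natAbs + z.natAbs + w.natAbs) hm x1 y1 z1 w1 hm' h3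
    subst hx1 hy1 hz1 hw1
    subst hz1' hz2' hz3' hz4'
    simp

theorem quaternion_norm_form_anisotropic (a b : ℕ) (ha : 0 < a) (hb : Nat.Prime b)
    (hres : ¬ ∃ x : ZMod b, x ^ 2 = (a : ZMod b)) :
    ∀ q0 q1 q2 q3 : ℚ,
      q0 ^ 2 - a * q1 ^ 2 - b * q2 ^ 2 + a * b * q3 ^ 2 = 0 →
        q0 = 0 ∧ q1 = 0 ∧ q2 = 0 ∧ q3 = 0 := by
  intro q0 q1 q2 q3 h
  set x : ℤ := q0.num * (q1.den * q2.den * q3.den) with hxdef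
  set y : ℤ := q1.num * (q0.den * q2.den * q3.den) with hydef
  set z : ℤ := q2.num * (q0.den * q1.den * q3.den) with hzdef
  set w : ℤ := q3.num * (q0.den * q1.den * q2.den) with hwdef
  have hq0 : (q0.num : ℚ) = q0 * q0.den :=
    (div_eq_iff (by exact_mod_cast q0.den_nz : ((q0.den:ℚ) ≠ 0))).mp (Rat.num_div_den q0)
  have hq1 : (q1.num : ℚ) = q1 * q1.den :=
    (div_eq_iff (by exact_mod_cast q1.den_nz : ((q1.den:ℚ) ≠ 0))).mp (Rat.num_div_den q1)
  have hq2 : (q2.num : ℚ) = q2 * q2.den :=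
    (div_eq_iff (by exact_mod_cast q2.den_nz : ((q2.den:ℚ) ≠ 0))).mp (Rat.num_div_den q2)
  have hq3 : (q3.num : ℚ) = q3 * q3.den :=
    (div_eq_iff (by exact_mod_cast q3.den_nz : ((q3.den:ℚ) ≠ 0))).mp (Rat.num_div_den q3)
  have hint : x ^ 2 - (a : ℤ) * y ^ 2 - b * z ^ 2 + a * b * w ^ 2 = 0 := by
    have : ((x ^ 2 - (a : ℤ) * y ^ 2 - b * z ^ 2 + a * b * w ^ 2 : ℤ) : ℚ) = 0 := by
      push_cast [hxdef, hydef, hzdef, hwdef]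
      rw [hq0, hq1, hq2, hq3]
      linear_combination ((q0.den : ℚ) * q1.den * q2.den * q3.den) ^ 2 * h
    exact_mod_cast this
  obtain ⟨hx0, hy0, hz0, hw0⟩ := quat_int a b hb hres
    (x.natAbs + y.natAbs + z.natAbs + w.natAbs + 1) x y z w (by omega) hint
  have d0 : (q0.den : ℤ) ≠ 0 := by exact_mod_cast q0.den_nz
  have d1 : (q1.den : ℤ) ≠ 0 := by exact_mod_cast q1.den_nz
  have d2 : (q2.den : ℤ) ≠ 0 := by exact_mod_cast q2.den_nz
  have d3 : (q3.den : ℤ) ≠ 0 := by exact_mod_cast q3.den_nz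
  refine ⟨Rat.num_eq_zero.mp ?_, Rat.num_eq_zero.mp ?_, Rat.num_eq_zero.mp ?_, Rat.num_eq_zero.mp ?_⟩
  · rcases mul_eq_zero.mp (hxdef ▸ hx0) with h' | h'
    · exact h'
    · exact absurd h' (mul_ne_zero (mul_ne_zero d1 d2) d3)
  · rcases mul_eq_zero.mp (hydef ▸ hy0) with h' | h'
    · exact h'
    · exact absurd h' (mul_ne_zero (mul_ne_zero d0 d2) d3)
  · rcases mul_eq_zero.mp (hzdef ▸ hz0) with h' | h'
    · exact h'
    · exact absurd h' (mul_ne_zero (mul_ne_zero d0 d1) d3)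
  · rcases mul_eq_zero.mp (hwdef ▸ hw0) with h' | h'
    · exact h'
    · exact absurd h' (mul_ne_zero (mul_ne_zero d0 d1) d2)
end

section
/- Let a, b be positive integers and set e₁ = (1,0) ∈ ℂ². The ℤ-span of {e₁, I·e₁, J·e₁, K·e₁} = {(1,0), (0,−√a·i), (0,√b), (√(ab)·i, 0)} is a lattice (discrete cocompact subgroup) in ℂ² ≅ ℝ⁴, and the symplectic form ω = Im h (with h of signature (1,1)) takes values in √(ab)·ℤ on this lattice. -/
/-!
The four vectors occupy four distinct real coordinates of ℂ² ≅ ℝ⁴ (with nonzero entries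
1, −√a, √b, √(ab)), so they are an ℝ-basis and their ℤ-span is a full lattice. Being
ℤ-bilinear, ω maps L × L into the ℤ-span of its values on the generators, and its Gram matrix
there is √(ab) times an integer matrix: the only nonzero pairings are ω(e₁, K e₁) = −√(ab) and
ω(I e₁, J e₁) = √(ab), up to antisymmetry.
-/

open Matrix Complex

noncomputable section

open Submodule Module ComplexConjugate

theorem Submodule.apply_mem_of_image2_subset {R M N P : Type*} [CommSemiring R]
    [AddCommMonoid M] [AddCommMonoid N] [AddCommMonoid P] [Module R M] [Module R N] [Module R P]
    (f : M →ₗ[R] N →ₗ[R] P) {s : Set M} {t : Set N} {p : Submodule R P}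
    (h : Set.image2 (fun m n => f m n) s t ⊆ p) {m : M} {n : N}
    (hm : m ∈ span R s) (hn : n ∈ span R t) : f m n ∈ p :=
  map₂_le.mp ((map₂_span_span R f s t).le.trans (span_le.mpr h)) m hm n hn

theorem LinearIndependent.discreteTopology_span_int_and_span_real_eq_top
    {E ι : Type*} [NormedAddCommGroup E] [NormedSpace ℝ E] [FiniteDimensional ℝ E] [Fintype ι]
    {v : ι → E} (hv : LinearIndependent ℝ v) (hcard : Fintype.card ι = finrank ℝ E) :
    DiscreteTopology (span ℤ (Set.range v)) ∧
      span ℝ (span ℤ (Set.range v) : Set E) = ⊤ := by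
  rw [← coe_basisOfLinearIndependentOfCardEqFinrank' v hv hcard]
  exact ⟨inferInstance, ZSpan.span_top _⟩

/-- `ω = Im h`, as a real bilinear form. -/
def imHermitian : (Fin 2 → ℂ) →ₗ[ℝ] (Fin 2 → ℂ) →ₗ[ℝ] ℝ :=
  LinearMap.mk₂ ℝ (fun v w => (v 0 * conj (w 0) - v 1 * conj (w 1)).im)
    (fun _ _ _ => by simp only [Pi.add_apply, add_mul, sub_im, add_im, mul_im]; ring)
    (fun _ _ _ => by
      simp only [Pi.smul_apply, real_smul, sub_im, mul_im, mul_re, ofReal_re, ofReal_im]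
      ring)
    (fun _ _ _ => by simp only [Pi.add_apply, map_add, mul_add, sub_im, add_im, mul_im]; ring)
    (fun _ _ _ => by
      simp only [Pi.smul_apply, real_smul, map_mul, conj_ofReal, sub_im, mul_im, mul_re,
        ofReal_re, ofReal_im]
      ring)

/-- `e₁, I e₁, J e₁, K e₁` for `x = √a`, `y = √b`. -/
def quaternionLatticeGenerators (x y : ℝ) : Fin 4 → Fin 2 → ℂ :=
  ![![1, 0], ![0, -(x * I)], ![0, y], ![((x * y : ℝ) : ℂ) * I, 0]]

def quaternionLatticeGram : Matrix (Fin 4) (Fin 4) ℤ :=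
  !![0, 0, 0, -1; 0, 0, 1, 0; 0, -1, 0, 0; 1, 0, 0, 0]

theorem linearIndependent_quaternionLatticeGenerators {x y : ℝ} (hx : x ≠ 0) (hy : y ≠ 0) :
    LinearIndependent ℝ (quaternionLatticeGenerators x y) := by
  rw [Fintype.linearIndependent_iff]
  intro g hg
  have hfirst : g 0 = 0 ∧ g 3 = 0 := by
    simpa [Fin.sum_univ_four, quaternionLatticeGenerators, Complex.ext_iff, hx, hy]
      using congrFun hg 0
  have hsecond : g 2 = 0 ∧ g 1 = 0 := by
    simpa [Fin.sum_univ_four, quaternionLatticeGenerators, Complex.ext_iff, hx, hy]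
      using congrFun hg 1
  intro i
  fin_cases i
  exacts [hfirst.1, hsecond.2, hsecond.1, hfirst.2]

theorem imHermitian_quaternionLatticeGenerators (x y : ℝ) (i j : Fin 4) :
    imHermitian (quaternionLatticeGenerators x y i) (quaternionLatticeGenerators x y j) =
      quaternionLatticeGram i j * (x * y) := by
  fin_cases i <;> fin_cases j <;>
    simp [imHermitian, quaternionLatticeGenerators, quaternionLatticeGram, mul_comm]

theorem exists_imHermitian_eq_intCast_mul {x y : ℝ} {v w : Fin 2 → ℂ}
    (hv : v ∈ span ℤ (Set.range (quaternionLatticeGenerators x y)))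
    (hw : w ∈ span ℤ (Set.range (quaternionLatticeGenerators x y))) :
    ∃ k : ℤ, imHermitian v w = k * (x * y) := by
  have hgram : Set.image2 (fun v w => imHermitian.restrictScalars₁₂ ℤ ℤ v w)
      (Set.range (quaternionLatticeGenerators x y)) (Set.range (quaternionLatticeGenerators x y))
      ⊆ span ℤ {x * y} := by
    rintro _ ⟨_, ⟨i, rfl⟩, _, ⟨j, rfl⟩, rfl⟩
    exact mem_span_singleton.mpr ⟨quaternionLatticeGram i j, by
      simp [imHermitian_quaternionLatticeGenerators]⟩
  obtain ⟨k, hk⟩ := mem_span_singleton.mp (apply_mem_of_image2_subset _ hgram hv hw)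
  exact ⟨k, by simpa [zsmul_eq_mul] using hk.symm⟩

theorem quaternion_order_gives_lattice (a b : ℕ) (ha : 0 < a) (hb : 0 < b) :
    let v₁ : Fin 2 → ℂ := ![1, 0]
    let v₂ : Fin 2 → ℂ := ![0, -((Real.sqrt a : ℂ) * Complex.I)]
    let v₃ : Fin 2 → ℂ := ![0, (Real.sqrt b : ℂ)]
    let v₄ : Fin 2 → ℂ := ![(Real.sqrt (a * b) : ℂ) * Complex.I, 0]
    let ω : (Fin 2 → ℂ) → (Fin 2 → ℂ) → ℝ := fun v w =>
      (v 0 * (starRingEnd ℂ) (w 0) - v 1 * (starRingEnd ℂ) (w 1)).im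
    let L : Submodule ℤ (Fin 2 → ℂ) := Submodule.span ℤ {v₁, v₂, v₃, v₄}
    DiscreteTopology L ∧
    Submodule.span ℝ (L : Set (Fin 2 → ℂ)) = ⊤ ∧
    (∀ v ∈ L, ∀ w ∈ L, ∃ k : ℤ, ω v w = k * Real.sqrt (a * b)) := by
  intro v₁ v₂ v₃ v₄ ω L
  have hsqrt : √((a : ℝ) * b) = √a * √b := Real.sqrt_mul (Nat.cast_nonneg a) b
  have hL : L = span ℤ (Set.range (quaternionLatticeGenerators √a √b)) := by
    simp only [L, v₁, v₂, v₃, v₄, hsqrt, quaternionLatticeGenerators, Matrix.range_cons,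
      Matrix.range_empty, Set.union_empty, Set.singleton_union]
  have hli := linearIndependent_quaternionLatticeGenerators
    (Real.sqrt_ne_zero'.mpr (Nat.cast_pos.mpr ha)) (Real.sqrt_ne_zero'.mpr (Nat.cast_pos.mpr hb))
  obtain ⟨hdiscrete, hspan⟩ := hli.discreteTopology_span_int_and_span_real_eq_top
    (by simp [Module.finrank_pi_fintype, Complex.finrank_real_complex])
  rw [hL, hsqrt]
  exact ⟨hdiscrete, hspan, fun v hv w hw => exists_imHermitian_eq_intCast_mul hv hw⟩
end
end

section
/- Let c > 0, ρ₀ > 0, n ≥ 2. Suppose A₂ ∈ Mat_{2,2n−2}(ℝ) and A₃ ∈ Mat_{2n−2,2}(ℝ) satisfy ((ρ₀+c)/ρ₀² − 1/(2ρ₀))·A₂ᵀ + (1/(2ρ₀))·A₃ = 0 and A₂ᵀ·J₂ + J_{2n−2}·A₃ = 0, where J₂ = [[0,−1],[1,0]] and J_{2n−2} is the block-diagonal matrix consisting of n−1 copies of J₂. Then A₂ = 0 and A₃ = 0. -/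
open Matrix

theorem Jsq (N : ℕ) (hN : N % 2 = 0)
    (J : Matrix (Fin N) (Fin N) ℝ)
    (hJ : ∀ k l : Fin N, J k l = if k.val = l.val + 1 ∧ k.val % 2 = 1 then 1
        else if l.val = k.val + 1 ∧ l.val % 2 = 1 then -1 else 0) :
    J * J = -1 := by
  have hJ0 : ∀ a b : Fin N, ¬(a.val = b.val + 1 ∧ a.val % 2 = 1) →
      ¬(b.val = a.val + 1 ∧ b.val % 2 = 1) → J a b = 0 := by
    intro a b h1 h2; rw [hJ, if_neg h1, if_neg h2]
  have hJ1 : ∀ a b : Fin N, a.val = b.val + 1 ∧ a.val % 2 = 1 → J a b = 1 := by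
    intro a b h; rw [hJ, if_pos h]
  have hJm1 : ∀ a b : Fin N, b.val = a.val + 1 ∧ b.val % 2 = 1 → J a b = -1 := by
    intro a b h; rw [hJ, if_neg (by omega), if_pos h]
  ext k l
  rw [Matrix.mul_apply]
  have hrhs : (-1 : Matrix (Fin N) (Fin N) ℝ) k l = if k = l then -1 else 0 := by
    simp [Matrix.one_apply]; split <;> simp
  rw [hrhs]
  have hkl : (k = l) ↔ (k.val = l.val) := Fin.ext_iff
  by_cases hk : k.val % 2 = 1
  · have hpv : k.val - 1 < N := by have := k.isLt; omega
    set p : Fin N := ⟨k.val - 1, hpv⟩ with hpdef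
    have hm : p.val = k.val - 1 := rfl
    rw [Finset.sum_eq_single p]
    · rw [hJ1 k p ⟨by omega, hk⟩, one_mul]
      by_cases h : k = l
      · rw [if_pos h]
        have : l.val = p.val + 1 ∧ l.val % 2 = 1 := by rw [← h]; exact ⟨by omega, hk⟩
        rw [hJm1 p l this]
      · rw [if_neg h]
        have hne : k.val ≠ l.val := fun hh => h (Fin.ext hh)
        exact hJ0 p l (by omega) (by omega)
    · intro m _ hmne
      have hne : m.val ≠ p.val := fun hh => hmne (Fin.ext hh)
      rw [hJ0 k m (by omega) (by omega), zero_mul]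
    · intro h; exact absurd (Finset.mem_univ p) h
  · have hk0 : k.val % 2 = 0 := by omega
    have hpv : k.val + 1 < N := by have := k.isLt; omega
    set p : Fin N := ⟨k.val + 1, hpv⟩ with hpdef
    have hm : p.val = k.val + 1 := rfl
    rw [Finset.sum_eq_single p]
    · rw [hJm1 k p ⟨by omega, by omega⟩]
      by_cases h : k = l
      · rw [if_pos h]
        have : p.val = l.val + 1 ∧ p.val % 2 = 1 := by rw [← h]; exact ⟨by omega, by omega⟩
        rw [hJ1 p l this]; ring
      · rw [if_neg h]
        have hne : k.val ≠ l.val := fun hh => h (Fin.ext hh)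
        rw [hJ0 p l (by omega) (by omega)]; ring
    · intro m _ hmne
      have hne : m.val ≠ p.val := fun hh => hmne (Fin.ext hh)
      rw [hJ0 k m (by omega) (by omega), zero_mul]
    · intro h; exact absurd (Finset.mem_univ p) h

theorem offdiagonal_blocks_vanish (n : ℕ) (hn : 2 ≤ n) (c ρ₀ : ℝ) (hc : 0 < c) (hρ : 0 < ρ₀)
    (A₂ : Matrix (Fin 2) (Fin (2 * n - 2)) ℝ) (A₃ : Matrix (Fin (2 * n - 2)) (Fin 2) ℝ) :
    let J₂ : Matrix (Fin 2) (Fin 2) ℝ := !![0, -1; 1, 0]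
    let J₂ₙ : Matrix (Fin (2 * n - 2)) (Fin (2 * n - 2)) ℝ :=
      Matrix.of fun k l =>
        if k.val = l.val + 1 ∧ k.val % 2 = 1 then 1
        else if l.val = k.val + 1 ∧ l.val % 2 = 1 then -1 else 0
    ((ρ₀ + c) / ρ₀ ^ 2 - 1 / (2 * ρ₀)) • A₂ᵀ + (1 / (2 * ρ₀)) • A₃ = 0 →
    A₂ᵀ * J₂ + J₂ₙ * A₃ = 0 →
    A₂ = 0 ∧ A₃ = 0 := by
  intro J₂ J₂ₙ h1 h2
  have hρ' : ρ₀ ≠ 0 := ne_of_gt hρ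
  obtain ⟨κ, hκ⟩ : ∃ κ : ℝ, κ = -(2 * ρ₀) * ((ρ₀ + c) / ρ₀ ^ 2 - 1 / (2 * ρ₀)) := ⟨_, rfl⟩
  have hJ2 : J₂ * J₂ = -1 := by
    show (!![0, -1; 1, 0] : Matrix (Fin 2) (Fin 2) ℝ) * !![0, -1; 1, 0] = -1
    ext i j
    fin_cases i <;> fin_cases j <;>
      simp [Matrix.mul_apply, Fin.sum_univ_two, Matrix.one_apply]
  have hJN : J₂ₙ * J₂ₙ = -1 := by
    apply Jsq (2 * n - 2) (by omega)
    intro k l; rfl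
  -- A₃ = κ • A₂ᵀ
  have hA3 : A₃ = κ • A₂ᵀ := by
    have h1' : (1 / (2 * ρ₀)) • A₃ = -(((ρ₀ + c) / ρ₀ ^ 2 - 1 / (2 * ρ₀)) • A₂ᵀ) := by
      rw [eq_neg_iff_add_eq_zero, add_comm]; exact h1
    have h2' := congrArg (fun M => (2 * ρ₀) • M) h1'
    simp only [smul_smul] at h2'
    rw [show (2 * ρ₀) * (1 / (2 * ρ₀)) = 1 by field_simp] at h2'
    rw [one_smul] at h2'
    rw [h2', smul_neg, smul_smul, ← neg_smul, hκ]
    congr 1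
    ring
  have hκeq : κ = 1 - 2 * (ρ₀ + c) / ρ₀ := by
    rw [hκ]; field_simp; ring
  have hpos : 0 < (ρ₀ + c) / ρ₀ := div_pos (by linarith) hρ
  have hκ1 : κ ≠ 1 := by
    intro h; rw [hκeq] at h
    have : 2 * (ρ₀ + c) / ρ₀ = 2 * ((ρ₀ + c) / ρ₀) := by ring
    rw [this] at h; linarith
  have hκm1 : κ ≠ -1 := by
    intro h; rw [hκeq] at h
    have h3 : 2 * (ρ₀ + c) / ρ₀ = 2 * ((ρ₀ + c) / ρ₀) := by ring
    rw [h3] at h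
    have h4 : (ρ₀ + c) / ρ₀ = 1 := by linarith
    have h5 : ρ₀ + c = ρ₀ := by
      have := (div_eq_one_iff_eq hρ').mp h4
      linarith
    linarith
  have e1 : A₂ᵀ * J₂ = (-κ) • (J₂ₙ * A₂ᵀ) := by
    have h3 : A₂ᵀ * J₂ = -(J₂ₙ * A₃) := by
      rw [eq_neg_iff_add_eq_zero]; exact h2
    rw [h3, hA3, Matrix.mul_smul, neg_smul]
  have lhs : A₂ᵀ * J₂ * J₂ = -A₂ᵀ := by
    rw [Matrix.mul_assoc, hJ2, Matrix.mul_neg, Matrix.mul_one]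
  have rhs : A₂ᵀ * J₂ * J₂ = (κ * κ) • (-A₂ᵀ) := by
    rw [e1, Matrix.smul_mul, Matrix.mul_assoc, e1, Matrix.mul_smul, smul_smul,
      ← Matrix.mul_assoc, hJN, Matrix.neg_mul, Matrix.one_mul, smul_neg]
    module
  have e2 : -A₂ᵀ = (κ * κ) • (-A₂ᵀ) := lhs.symm.trans rhs
  have hB0 : A₂ᵀ = 0 := by
    have h5 : (κ * κ - 1) • A₂ᵀ = 0 := by
      rw [smul_neg] at e2
      have h' : (κ * κ) • A₂ᵀ - A₂ᵀ = 0 := by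
        rw [sub_eq_zero]
        exact (neg_inj.mp e2).symm
      rw [sub_smul, one_smul]
      exact h'
    rcases smul_eq_zero.mp h5 with h | h
    · exfalso
      have h6 : (κ - 1) * (κ + 1) = 0 := by linear_combination h
      rcases mul_eq_zero.mp h6 with h' | h'
      · exact hκ1 (by linarith)
      · exact hκm1 (by linarith)
    · exact h
  refine ⟨Matrix.transpose_eq_zero.mp hB0, ?_⟩
  rw [hA3, hB0, smul_zero]
end

section
/- Let n ≥ 2 be an integer and c > 0. Let G ⊂ ℝ³ be the subgroup generated by v₁ = (2π, 0, 4πc) and v₂ = (−2π/n, −2π, 4π(n−2)c/n). A point (0, 0, λ) ∈ ℝ³ satisfies (0,0,λ) + g ∈ ℝ × 2πℤ × {0} for some g ∈ G if and only if λ ∈ (4c/n)·2π·ℤ when n is even and λ ∈ (2c/n)·2π·ℤ when n is odd. -/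
/-!
The second coordinate of `p + x • v₁ + y • v₂` is `-2πy`, always in `2πℤ`, and the third is
`λ + (4πc/n)(n x + (n - 2) y)`. The integers `n x + (n - 2) y = n (x + y) - 2 y` form the ideal
`(n, 2)`, which is `2ℤ` for even `n` and `ℤ` for odd `n`.
-/

open Real

theorem Int.exists_mul_add_sub_two_mul_eq_iff (n m : ℤ) :
    (∃ x y : ℤ, n * x + (n - 2) * y = m) ↔ (Even n → Even m) := by
  constructor
  · rintro ⟨x, y, rfl⟩ ⟨k, rfl⟩
    exact ⟨k * x + (k - 1) * y, by ring⟩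
  · intro h
    rcases Int.even_or_odd n with hn | ⟨k, rfl⟩
    · obtain ⟨j, rfl⟩ := h hn
      exact ⟨j, -j, by ring⟩
    · exact ⟨m - k * m, k * m, by ring⟩

theorem exists_int_mul_iff_of_parity (n : ℕ) (a lam : ℝ) :
    (∃ m : ℤ, (Even (n : ℤ) → Even m) ∧ lam = a * m) ↔
      ((Even n → ∃ k : ℤ, lam = 2 * a * k) ∧ (Odd n → ∃ k : ℤ, lam = a * k)) := by
  rw [Int.even_coe_nat]
  constructor
  · rintro ⟨m, hm, rfl⟩
    refine ⟨fun hn => ?_, fun _ => ⟨m, rfl⟩⟩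
    obtain ⟨k, rfl⟩ := hm hn
    exact ⟨k, by push_cast; ring⟩
  · rintro ⟨heven, hodd⟩
    rcases Nat.even_or_odd n with hn | hn
    · obtain ⟨k, rfl⟩ := heven hn
      exact ⟨2 * k, fun _ => even_two_mul k, by push_cast; ring⟩
    · obtain ⟨k, rfl⟩ := hodd hn
      exact ⟨k, fun h => absurd hn (Nat.not_odd_iff_even.mpr h), rfl⟩

theorem central_lambda_condition_general (n : ℕ) (hn : 2 ≤ n) (c : ℝ) (lam : ℝ) :
    let v₁ : ℝ × ℝ × ℝ := (2 * π, 0, 4 * π * c)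
    let v₂ : ℝ × ℝ × ℝ := (-(2 * π) / n, -(2 * π), 4 * π * ((n : ℝ) - 2) * c / n)
    let p : ℝ × ℝ × ℝ := (0, 0, lam)
    (∃ x y b : ℤ, (p + x • v₁ + y • v₂).2.1 = 2 * π * b ∧ (p + x • v₁ + y • v₂).2.2 = 0) ↔
      ((Even n → ∃ k : ℤ, lam = 2 * π * (4 * c / n) * k) ∧
       (Odd n → ∃ k : ℤ, lam = 2 * π * (2 * c / n) * k)) := by
  intro v₁ v₂ p
  have hn0 : (n : ℝ) ≠ 0 := Nat.cast_ne_zero.mpr (by omega)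
  set a := 4 * π * c / n
  have hcoord (x y : ℤ) : (p + x • v₁ + y • v₂).2.1 = 2 * π * (-y : ℤ) ∧
      (p + x • v₁ + y • v₂).2.2 = lam - a * ((n * -x + (n - 2) * -y : ℤ) : ℝ) := by
    simp only [p, v₁, v₂, a, Prod.fst_add, Prod.snd_add, Prod.smul_mk, zsmul_eq_mul]
    constructor
    · push_cast; ring
    · push_cast; field_simp; ring
  rw [show 2 * π * (4 * c / n) = 2 * a by ring, show 2 * π * (2 * c / n) = a by ring,
    ← exists_int_mul_iff_of_parity]
  simp only [hcoord, sub_eq_zero, ← Int.exists_mul_add_sub_two_mul_eq_iff]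
  constructor
  · rintro ⟨x, y, -, -, hlam⟩
    exact ⟨_, ⟨-x, -y, rfl⟩, hlam⟩
  · rintro ⟨-, ⟨x, y, rfl⟩, hlam⟩
    exact ⟨-x, -y, y, by rw [neg_neg], by simpa only [neg_neg] using hlam⟩

theorem central_lambda_condition (n : ℕ) (hn : 2 ≤ n) (c : ℝ) (hc : 0 < c) (lam : ℝ) :
    let v₁ : ℝ × ℝ × ℝ := (2 * π, 0, 4 * π * c)
    let v₂ : ℝ × ℝ × ℝ := (-(2 * π) / n, -(2 * π), 4 * π * ((n : ℝ) - 2) * c / n)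
    let p : ℝ × ℝ × ℝ := (0, 0, lam)
    (∃ x y b : ℤ, (p + x • v₁ + y • v₂).2.1 = 2 * π * b ∧ (p + x • v₁ + y • v₂).2.2 = 0) ↔
      ((Even n → ∃ k : ℤ, lam = 2 * π * (4 * c / n) * k) ∧
       (Odd n → ∃ k : ℤ, lam = 2 * π * (2 * c / n) * k)) :=
  central_lambda_condition_general n hn c lam
end
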